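/- arXiv:2001.05921 — 8 statements merged into one kernel-verified Lean document; each statement's English description precedes it below -/
import Mathlib

section
/- Let ε be a symmetrized Fitch map on X with colors M. Then for every color m ∈ M, the graph G_m(ε) with vertex set X and edges {x,y} whenever m ∈ ε(x,y) contains no induced K_1 + K_2, i.e., G_m(ε) is a complete multi-partite graph. -/
open SimpleGraph

/-- A phylogenetic (unrooted) tree with leaf set `X`: a finite connected acyclic
simple graph in which the leaves of `X` are injectively embedded as vertices of
degree at most one, and all other (inner) vertices have degree at least three. -/
structure PhyloTree (X : Type) where
  V : Type
  [finV : Fintype V]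
  T : SimpleGraph V
  conn : T.Connected
  acyc : T.IsAcyclic
  leaf : X → V
  leaf_inj : Function.Injective leaf
  leaf_deg : ∀ x : X, (T.neighborSet (leaf x)).ncard ≤ 1
  inner_deg : ∀ v : V, v ∉ Set.range leaf → 3 ≤ (T.neighborSet v).ncard

/-- `(t, lab)` explains `ε`: for distinct leaves `x,y`, a color `m` belongs to
`ε x y` iff the (unique) path from `x` to `y` in `t` contains an `m`-edge. -/
def Explains {X M : Type} (t : PhyloTree X) (lab : Sym2 t.V → Set M)
    (ε : X → X → Set M) : Prop :=
  ∀ x y : X, x ≠ y → ∀ p : t.T.Walk (t.leaf x) (t.leaf y), p.IsPath →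
    ∀ m : M, m ∈ ε x y ↔ ∃ e ∈ p.edges, m ∈ lab e

/-- `ε` is a symmetrized Fitch map: some edge-labeled tree explains it. -/
def IsSymFitch {X M : Type} (ε : X → X → Set M) : Prop :=
  ∃ t : PhyloTree X, ∃ lab : Sym2 t.V → Set M, Explains t lab ε

/-- The tree `t` displays the subsplit `A|B`: some edge of `t` separates the
leaves in `A` from the leaves in `B`. -/
def Displays {X : Type} (t : PhyloTree X) (A B : Set X) : Prop :=
  ∃ u v : t.V, t.T.Adj u v ∧
    (∀ x ∈ A, (t.T.deleteEdges {s(u,v)}).Reachable (t.leaf x) u) ∧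
    (∀ x ∈ B, (t.T.deleteEdges {s(u,v)}).Reachable (t.leaf x) v)

/-- The complementary neighborhood `N_m[y]` of `y` w.r.t. color `m`. -/
def Nbr {X M : Type} (ε : X → X → Set M) (m : M) (y : X) : Set X :=
  {x | x = y ∨ m ∉ ε x y}

/-- For a symmetrized Fitch map `ε` and any color `m`, the graph `G_m(ε)`
(vertices `X`, edges the pairs `{x,y}` with `m ∈ ε x y`) has no induced
`K₁ + K₂`, i.e. it is a complete multi-partite graph. -/
theorem fitch_graph_no_induced_K1_plus_K2 {X M : Type} [Fintype X]
    (ε : X → X → Set M) (hsym : ∀ x y : X, ε x y = ε y x)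
    (hF : IsSymFitch ε) :
    ∀ m : M, ¬ ∃ a b c : X, a ≠ b ∧ a ≠ c ∧ b ≠ c ∧
      m ∈ ε b c ∧ m ∉ ε a b ∧ m ∉ ε a c := by
  intro m hK
  obtain ⟨a, b, c, hab, hac, hbc, hmbc, hmab, hmac⟩ := hK
  obtain ⟨t, lab, hex⟩ := hF
  haveI : DecidableEq t.V := Classical.decEq _
  obtain ⟨pab⟩ := t.conn (t.leaf a) (t.leaf b)
  obtain ⟨pac⟩ := t.conn (t.leaf a) (t.leaf c)
  -- replace by simple paths
  set p : t.T.Walk (t.leaf a) (t.leaf b) := pab.bypass with hp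
  set q : t.T.Walk (t.leaf a) (t.leaf c) := pac.bypass with hq
  have hpP : p.IsPath := pab.bypass_isPath
  have hqP : q.IsPath := pac.bypass_isPath
  -- walk from b to c through a
  set w : t.T.Walk (t.leaf b) (t.leaf c) := p.reverse.append q with hw
  have hrP : w.bypass.IsPath := w.bypass_isPath
  obtain ⟨e, her, hme⟩ := (hex b c hbc w.bypass hrP m).mp hmbc
  have hsub : e ∈ w.edges := w.edges_bypass_subset her
  have : e ∈ p.edges ∨ e ∈ q.edges := by
    rw [hw] at hsub
    rw [SimpleGraph.Walk.edges_append, List.mem_append,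
        SimpleGraph.Walk.edges_reverse, List.mem_reverse] at hsub
    exact hsub
  rcases this with h | h
  · exact hmab ((hex a b hab p hpP m).mpr ⟨e, h, hme⟩)
  · exact hmac ((hex a c hac q hqP m).mpr ⟨e, h, hme⟩)
end

section
/- Let ε be a symmetrized Fitch map on X with colors M. Then for every m ∈ M, the collection of complementary neighborhoods N_m[y] := {x ∈ X∖{y} : m ∉ ε(x,y)} ∪ {y}, for y ∈ X, forms a partition of X. -/
open SimpleGraph

/-- For a symmetrized Fitch map `ε` on `X` (`|X| ≥ 3`) and every color `m`, the
complementary neighborhoods `N_m[y] = {x ≠ y : m ∉ ε x y} ∪ {y}` form a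
partition of `X`. -/
theorem fitch_complementaryNeighborhoods_partition {X M : Type} [Fintype X]
    (hcard : 3 ≤ Fintype.card X)
    (ε : X → X → Set M) (hsym : ∀ x y : X, ε x y = ε y x)
    (hF : IsSymFitch ε) :
    ∀ m : M, Setoid.IsPartition (Set.range (Nbr ε m)) := by
  classical
  intro m
  obtain ⟨t, lab, hex⟩ := hF
  set r : X → X → Prop := fun a b => a = b ∨ m ∉ ε a b with hr
  have hrsym : ∀ a b, r a b → r b a := by
    intro a b h
    rcases h with h | h
    · exact Or.inl h.symm
    · exact Or.inr (by rw [hsym]; exact h)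
  have hrtrans : ∀ a b c, r a b → r b c → r a c := by
    intro a b c hab hbc
    by_cases h1 : a = b; · subst h1; exact hbc
    by_cases h2 : b = c; · subst h2; exact hab
    by_cases h3 : a = c; · exact Or.inl h3
    have hmab : m ∉ ε a b := hab.resolve_left h1
    have hmbc : m ∉ ε b c := hbc.resolve_left h2
    refine Or.inr fun hmac => ?_
    obtain ⟨w1⟩ := t.conn.preconnected (t.leaf a) (t.leaf b)
    obtain ⟨w2⟩ := t.conn.preconnected (t.leaf b) (t.leaf c)
    obtain ⟨e, he, hme⟩ :=
      (hex a c h3 (w1.bypass.append w2.bypass).bypass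
        (w1.bypass.append w2.bypass).bypass_isPath m).mp hmac
    have hmem := (w1.bypass.append w2.bypass).edges_bypass_subset he
    rw [SimpleGraph.Walk.edges_append, List.mem_append] at hmem
    rcases hmem with h | h
    · exact hmab ((hex a b h1 w1.bypass w1.bypass_isPath m).mpr ⟨e, h, hme⟩)
    · exact hmbc ((hex b c h2 w2.bypass w2.bypass_isPath m).mpr ⟨e, h, hme⟩)
  constructor
  · rintro ⟨y, hy⟩
    have hy' : y ∈ Nbr ε m y := Or.inl rfl
    rw [hy] at hy'
    exact hy'
  · intro x
    refine ⟨Nbr ε m x, ⟨⟨x, rfl⟩, Or.inl rfl⟩, ?_⟩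
    rintro s ⟨⟨y, rfl⟩, hxy⟩
    have hxy' : r x y := hxy
    ext z
    show r z y ↔ r z x
    exact ⟨fun hzy => hrtrans z y x hzy (hrsym x y hxy'),
      fun hzx => hrtrans z x y hzx hxy'⟩
end

section
/- A symmetric map ε : X×X∖diag → P(M) with |ε(x,y)| ≤ 1 for all distinct x, y is a symmetrized Fitch map if and only if ε is a monochromatic symmetrized Fitch map, i.e., there exists a single color m such that ε(x,y) ⊆ {m} for all distinct x, y and ε is a symmetrized Fitch map. -/
open SimpleGraph

/-- Triangle property: in a Fitch map, `ε x z ⊆ ε x y ∪ ε y z`. -/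
lemma triangle_fitch {X M : Type} {ε : X → X → Set M} (h : IsSymFitch ε)
    {x y z : X} (hxy : x ≠ y) (hyz : y ≠ z) (hxz : x ≠ z) :
    ε x z ⊆ ε x y ∪ ε y z := by
  classical
  obtain ⟨t, lab, hE⟩ := h
  obtain ⟨wxy⟩ := t.conn (t.leaf x) (t.leaf y)
  obtain ⟨wyz⟩ := t.conn (t.leaf y) (t.leaf z)
  intro m hm
  have hxz' := (hE x z hxz ((wxy.bypass.append wyz.bypass).bypass)
    (SimpleGraph.Walk.bypass_isPath _) m).mp hm
  obtain ⟨e, he, hme⟩ := hxz'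
  have hsub := SimpleGraph.Walk.edges_bypass_subset _ he
  rw [SimpleGraph.Walk.edges_append, List.mem_append] at hsub
  rcases hsub with h1 | h2
  · exact Or.inl ((hE x y hxy wxy.bypass (SimpleGraph.Walk.bypass_isPath _) m).mpr ⟨e, h1, hme⟩)
  · exact Or.inr ((hE y z hyz wyz.bypass (SimpleGraph.Walk.bypass_isPath _) m).mpr ⟨e, h2, hme⟩)

/-- Two colored pairs sharing the point `x` use the same color. -/
lemma shared_color {X M : Type} {ε : X → X → Set M}
    (hsym : ∀ x y : X, ε x y = ε y x)
    (hsmall : ∀ x y : X, x ≠ y → (ε x y).Subsingleton)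
    (h : IsSymFitch ε) {x y y' : X} (hxy : x ≠ y) (hxy' : x ≠ y')
    {m m' : M} (hm : m ∈ ε x y) (hm' : m' ∈ ε x y') : m = m' := by
  by_cases hyy' : y = y'
  · subst hyy'; exact hsmall x y hxy hm hm'
  · rcases triangle_fitch h hxy' (Ne.symm hyy') hxy hm with h1 | h1
    · exact hsmall x y' hxy' h1 hm'
    · rcases triangle_fitch h hxy hyy' hxy' hm' with h2 | h2
      · exact hsmall x y hxy hm h2
      · have : m ∈ ε y y' := by rw [hsym]; exact h1
        exact hsmall y y' hyy' this h2

/-- Any two colors used by a Fitch map with subsingleton values coincide. -/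
lemma mono_color {X M : Type} {ε : X → X → Set M}
    (hsym : ∀ x y : X, ε x y = ε y x)
    (hsmall : ∀ x y : X, x ≠ y → (ε x y).Subsingleton)
    (h : IsSymFitch ε) {x y x' y' : X} (hxy : x ≠ y) (hxy' : x' ≠ y')
    {m m' : M} (hm : m ∈ ε x y) (hm' : m' ∈ ε x' y') : m = m' := by
  by_cases hxx' : x = x'
  · subst hxx'; exact shared_color hsym hsmall h hxy hxy' hm hm'
  by_cases hxy'2 : x = y'
  · subst hxy'2
    have hm'' : m' ∈ ε x x' := by rw [hsym]; exact hm'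
    exact shared_color hsym hsmall h hxy (Ne.symm hxy') hm hm''
  by_cases hyx' : y = x'
  · subst hyx'
    have hm0 : m ∈ ε y x := by rw [hsym]; exact hm
    exact shared_color hsym hsmall h (Ne.symm hxy) hxy' hm0 hm'
  by_cases hyy' : y = y'
  · subst hyy'
    have hm0 : m ∈ ε y x := by rw [hsym]; exact hm
    have hm'' : m' ∈ ε y x' := by rw [hsym]; exact hm'
    exact shared_color hsym hsmall h (Ne.symm hxy) (Ne.symm hxy') hm0 hm''
  · rcases triangle_fitch h hxx' (fun e => hyx' e.symm) hxy hm with h1 | h1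
    · have hm0 : m ∈ ε x' x := by rw [hsym]; exact h1
      exact shared_color hsym hsmall h (Ne.symm hxx') hxy' hm0 hm'
    · exact shared_color hsym hsmall h (fun e => hyx' e.symm) hxy' h1 hm'

/-- A symmetric map `ε` with `|ε(x,y)| ≤ 1` for all distinct `x,y` is a
symmetrized Fitch map iff it is a monochromatic symmetrized Fitch map, i.e.
there is a single color `m` with `ε(x,y) ⊆ {m}` for all distinct `x, y`
(and `ε` is a symmetrized Fitch map). -/
theorem restricted_fitch_iff_mono_fitch {X M : Type} [Fintype X] [Nonempty M]
    (hcard : 3 ≤ Fintype.card X)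
    (ε : X → X → Set M) (hsym : ∀ x y : X, ε x y = ε y x)
    (hsmall : ∀ x y : X, x ≠ y → (ε x y).Subsingleton) :
    IsSymFitch ε ↔
      ∃ m : M, (∀ x y : X, x ≠ y → ε x y ⊆ {m}) ∧ IsSymFitch ε := by
  constructor
  · intro h
    by_cases hne : ∃ x y : X, x ≠ y ∧ (ε x y).Nonempty
    · obtain ⟨x₀, y₀, hxy₀, m₀, hm₀⟩ := hne
      refine ⟨m₀, fun x y hxy m hm => ?_, h⟩
      exact mono_color hsym hsmall h hxy hxy₀ hm hm₀
    · obtain ⟨m⟩ := ‹Nonempty M›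
      refine ⟨m, fun x y hxy m' hm' => absurd ⟨x, y, hxy, m', hm'⟩ hne, h⟩
  · rintro ⟨m, _, h⟩
    exact h
end

section
/- If ε is a symmetrized Fitch map and (T, λ) is any edge-labeled tree explaining ε, then T displays every subsplit in the subsplit system S(ε) := { N|N' : N, N' ∈ ⋃_{m∈M} N_m[ε], both in the same N_m[ε], N ∩ N' = ∅ }. More precisely: for every color m and every two disjoint complementary neighborhoods N, N' ∈ N_m[ε], the subsplit N|N' is displayed by T. -/
open SimpleGraph

/-! An `m`-edge `e` on the `y`–`y'` path separates the two neighborhoods: every `x ∈ N_m[y]`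
is joined to `y` by a path without `m`-edges, which therefore avoids `e`, and symmetrically
for `y'`. -/

namespace SimpleGraph.Walk

variable {V : Type} {G : SimpleGraph V}

theorem IsPath.reachable_deleteEdges_of_mem_darts {a b : V} {p : G.Walk a b} (hp : p.IsPath)
    {d : G.Dart} (hd : d ∈ p.darts) :
    (G.deleteEdges {d.edge}).Reachable a d.fst ∧ (G.deleteEdges {d.edge}).Reachable d.snd b := by
  induction p with
  | nil => simp at hd
  | @cons u v w h q ih =>
    rw [cons_isPath_iff] at hp
    rw [darts_cons, List.mem_cons] at hd
    rcases hd with rfl | hd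
    · refine ⟨.rfl, ?_⟩
      by_contra hsep
      exact hp.2 (q.fst_mem_support_of_mem_edges (q.mem_edges_of_not_reachable_deleteEdges hsep))
    · obtain ⟨hreach_fst, hreach_snd⟩ := ih hp.1 hd
      have hne : s(u, v) ≠ d.edge := fun heq =>
        hp.2 (q.fst_mem_support_of_mem_edges (heq ▸ List.mem_map_of_mem (f := Dart.edge) hd))
      have hadj : (G.deleteEdges {d.edge}).Adj u v := by
        rw [deleteEdges_adj]
        exact ⟨h, hne⟩
      exact ⟨hadj.reachable.trans hreach_fst, hreach_snd⟩

end SimpleGraph.Walk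

section Nbr

variable {X M : Type} {ε : X → X → Set M} {m : M} {x y : X}

theorem self_mem_nbr : y ∈ Nbr ε m y := Or.inl rfl

theorem notMem_nbr_iff : x ∉ Nbr ε m y ↔ x ≠ y ∧ m ∈ ε x y := by
  simp [Nbr, not_or]

end Nbr

namespace Explains

variable {X M : Type} {ε : X → X → Set M} {t : PhyloTree X} {lab : Sym2 t.V → Set M}
  {m : M} {x y : X}

theorem exists_dart_separating (hexp : Explains t lab ε) (hxy : x ≠ y) (hm : m ∈ ε x y) :
    ∃ d : t.T.Dart, m ∈ lab d.edge ∧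
      (t.T.deleteEdges {d.edge}).Reachable (t.leaf x) d.fst ∧
      (t.T.deleteEdges {d.edge}).Reachable d.snd (t.leaf y) := by
  classical
  obtain ⟨w⟩ := t.conn.preconnected (t.leaf x) (t.leaf y)
  obtain ⟨e, he, hme⟩ := (hexp x y hxy w.bypass w.bypass_isPath m).mp hm
  obtain ⟨d, hd, rfl⟩ := List.mem_map.mp he
  exact ⟨d, hme, w.bypass_isPath.reachable_deleteEdges_of_mem_darts hd⟩

theorem reachable_deleteEdges_of_mem_nbr (hexp : Explains t lab ε) (hx : x ∈ Nbr ε m y)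
    {e : Sym2 t.V} (he : m ∈ lab e) :
    (t.T.deleteEdges {e}).Reachable (t.leaf x) (t.leaf y) := by
  classical
  by_cases hxy : x = y
  · subst hxy; rfl
  obtain ⟨w⟩ := t.conn.preconnected (t.leaf x) (t.leaf y)
  by_contra hsep
  exact hx.resolve_left hxy ((hexp x y hxy w.bypass w.bypass_isPath m).mpr
    ⟨e, w.bypass.mem_edges_of_not_reachable_deleteEdges hsep, he⟩)

end Explains

theorem explaining_tree_displays_subsplits_general {X M : Type}
    (ε : X → X → Set M)
    (t : PhyloTree X) (lab : Sym2 t.V → Set M) (hexp : Explains t lab ε) :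
    ∀ m : M, ∀ y y' : X, Disjoint (Nbr ε m y) (Nbr ε m y') →
      Displays t (Nbr ε m y) (Nbr ε m y') := by
  intro m y y' hdisj
  obtain ⟨hne, hm⟩ := notMem_nbr_iff.mp (Set.disjoint_left.mp hdisj self_mem_nbr)
  obtain ⟨d, hd, hy, hy'⟩ := hexp.exists_dart_separating hne hm
  exact ⟨d.fst, d.snd, d.adj,
    fun x hx => (hexp.reachable_deleteEdges_of_mem_nbr hx hd).trans hy,
    fun x hx => (hexp.reachable_deleteEdges_of_mem_nbr hx hd).trans hy'.symm⟩

/-- Every edge-labeled tree `(t, lab)` explaining a symmetrized Fitch map `ε`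
displays every subsplit `N|N'` formed by two disjoint complementary
neighborhoods of the same color. -/
theorem explaining_tree_displays_subsplits {X M : Type} [Fintype X]
    (ε : X → X → Set M) (hsym : ∀ x y : X, ε x y = ε y x)
    (t : PhyloTree X) (lab : Sym2 t.V → Set M) (hexp : Explains t lab ε) :
    ∀ m : M, ∀ y y' : X, Disjoint (Nbr ε m y) (Nbr ε m y') →
      Displays t (Nbr ε m y) (Nbr ε m y') :=
  explaining_tree_displays_subsplits_general ε t lab hexp
end

section
/- A symmetric map ε : X×X∖diag → P(M) is a symmetrized Fitch map if and only if (1) for every m ∈ M the complementary neighborhoods N_m[ε] form a partition of X, and (2) the subsplit system S(ε) := { N|N' : N, N' ∈ N_m[ε] for some m ∈ M, N ∩ N' = ∅ } is compatible. -/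
open SimpleGraph

/-!
For a color `m`, call leaves `x, y` `m`-related when `x = y` or `m ∉ ε x y`, so that `Nbr ε m y`
is the set of leaves related to `y`. An edge-labelled tree explains `ε` exactly when, for every
`m`, two leaves are `m`-related iff no `m`-labelled edge separates them. Such a relation is an
equivalence, and an `m`-edge separating two of its classes displays them.

Conversely, given a tree displaying every pair of distinct classes, label an edge with `m` when
it separates no two leaves of a common class. The subtrees spanned by distinct classes are then
vertex-disjoint, so a leaf-to-leaf path all of whose edges lie in such subtrees stays inside a
single one; since a leaf lies in a spanned subtree only as one of its spanning leaves, both ends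
are in the same class. Hence the path between leaves of different classes carries an `m`-edge.
-/

lemma Setoid.isPartition_range_of_forall_mem_iff {α : Type*} {f : α → Set α} (r : Setoid α)
    (h : ∀ x y, x ∈ f y ↔ r x y) : Setoid.IsPartition (Set.range f) := by
  have hf : Set.range f = r.classes := by
    ext s
    exact ⟨fun ⟨y, hy⟩ => ⟨y, hy ▸ Set.ext fun x => h x y⟩,
      fun ⟨y, hy⟩ => ⟨y, hy ▸ Set.ext fun x => h x y⟩⟩
  exact hf ▸ r.isPartition_classes

namespace SimpleGraph

variable {V : Type*} {G : SimpleGraph V}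

lemma IsAcyclic.mem_edges_iff_not_reachable_deleteEdges (hG : G.IsAcyclic) {a b : V}
    {p : G.Walk a b} (hp : p.IsPath) {e : Sym2 V} :
    e ∈ p.edges ↔ ¬(G.deleteEdges {e}).Reachable a b := by
  classical
  induction e using Sym2.ind with
  | _ u v =>
    rw [reachable_deleteEdges_iff_exists_walk, not_exists_not]
    refine ⟨fun he q => ?_, fun h => h p⟩
    have hpq : p = q.bypass :=
      congrArg Subtype.val ((hG.subsingleton_path a b).elim ⟨p, hp⟩ ⟨q.bypass, q.bypass_isPath⟩)
    exact q.edges_bypass_subset_edges (hpq ▸ he)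

lemma IsAcyclic.reachable_deleteEdges_of_mem_support (hG : G.IsAcyclic) {a b c : V}
    {p : G.Walk a b} (hp : p.IsPath) {e : Sym2 V} (hab : (G.deleteEdges {e}).Reachable a b)
    (hc : c ∈ p.support) : (G.deleteEdges {e}).Reachable a c := by
  classical
  have he : e ∉ p.edges := fun he => (hG.mem_edges_iff_not_reachable_deleteEdges hp).1 he hab
  exact ⟨(p.takeUntil c hc).toDeleteEdges {e} fun f hf hfe =>
    he (Set.mem_singleton_iff.1 hfe ▸ p.edges_takeUntil_subset_edges hc hf)⟩

lemma reachable_deleteEdges_or_of_walk (u v : V) {a b : V} (p : G.Walk a b) :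
    (G.deleteEdges {s(u, v)}).Reachable a b ∨ (G.deleteEdges {s(u, v)}).Reachable a u ∨
      (G.deleteEdges {s(u, v)}).Reachable a v := by
  induction p with
  | nil => exact Or.inl .rfl
  | @cons a c b h q ih =>
    by_cases he : s(a, c) = s(u, v)
    · rcases Sym2.eq_iff.1 he with ⟨rfl, -⟩ | ⟨rfl, -⟩
      · exact Or.inr (Or.inl .rfl)
      · exact Or.inr (Or.inr .rfl)
    · have hac : (G.deleteEdges {s(u, v)}).Adj a c := deleteEdges_adj.2 ⟨h, he⟩
      exact ih.imp hac.reachable.trans (Or.imp hac.reachable.trans hac.reachable.trans)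

lemma Connected.reachable_deleteEdges_or (hG : G.Connected) (u v a : V) :
    (G.deleteEdges {s(u, v)}).Reachable a u ∨ (G.deleteEdges {s(u, v)}).Reachable a v :=
  (reachable_deleteEdges_or_of_walk u v (hG a u).some).elim Or.inl id

lemma Connected.exists_adj_of_not_reachable_deleteEdges (hG : G.Connected) {a b : V}
    {e : Sym2 V} (h : ¬(G.deleteEdges {e}).Reachable a b) :
    ∃ u v, G.Adj u v ∧ e = s(u, v) ∧ (G.deleteEdges {e}).Reachable a u ∧
      (G.deleteEdges {e}).Reachable b v := by
  induction e using Sym2.ind with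
  | _ u v =>
    have huv : G.Adj u v := by
      by_contra huv
      rw [deleteEdges_eq_self.2 (Set.disjoint_singleton_right.2 huv)] at h
      exact h (hG a b)
    rcases hG.reachable_deleteEdges_or u v a with ha | ha <;>
      rcases hG.reachable_deleteEdges_or u v b with hb | hb
    · exact absurd (ha.trans hb.symm) h
    · exact ⟨u, v, huv, rfl, ha, hb⟩
    · exact ⟨v, u, huv.symm, Sym2.eq_swap, ha, hb⟩
    · exact absurd (ha.trans hb.symm) h

lemma Walk.IsPath.eq_or_eq_of_mem_support {a b l : V} {p : G.Walk a b} (hp : p.IsPath)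
    (hl : (G.neighborSet l).Subsingleton) (h : l ∈ p.support) : l = a ∨ l = b := by
  classical
  by_contra! hne
  set q₁ := p.takeUntil l h
  set q₂ := p.dropUntil l h
  have h₁ := q₁.mk_penultimate_end_mem_edges (Walk.not_nil_of_ne hne.1.symm)
  have h₂ := q₂.mk_start_snd_mem_edges (Walk.not_nil_of_ne hne.2)
  have hsnd : q₁.penultimate = q₂.snd :=
    hl (q₁.adj_penultimate (Walk.not_nil_of_ne hne.1.symm)).symm
      (q₂.adj_snd (Walk.not_nil_of_ne hne.2))
  have hnd := hp.isTrail.edges_nodup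
  rw [← p.take_spec h, Walk.edges_append] at hnd
  exact List.disjoint_of_nodup_append hnd h₁ (hsnd ▸ Sym2.eq_swap ▸ h₂)

end SimpleGraph

namespace PhyloTree

variable {X : Type} (t : PhyloTree X)

def Separates (e : Sym2 t.V) (x y : X) : Prop :=
  ¬(t.T.deleteEdges {e}).Reachable (t.leaf x) (t.leaf y)

def cutSetoid (E : Set (Sym2 t.V)) : Setoid X where
  r x y := ∀ e ∈ E, ¬t.Separates e x y
  iseqv :=
    { refl := fun _ _ _ h => h .rfl
      symm := fun h e he h' => h e he fun hr => h' hr.symm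
      trans := fun h₁ h₂ e he h' => h₁ e he fun h₁ => h₂ e he fun h₂ => h' (h₁.trans h₂) }

@[simp]
lemma cutSetoid_apply {E : Set (Sym2 t.V)} {x y : X} :
    t.cutSetoid E x y ↔ ∀ e ∈ E, ¬t.Separates e x y :=
  Iff.rfl

/-- The vertex set of the subtree spanned by the leaves in `A`. -/
def hull (A : Set X) : Set t.V :=
  {c | ∃ z ∈ A, ∃ w ∈ A, ∃ p : t.T.Walk (t.leaf z) (t.leaf w), p.IsPath ∧ c ∈ p.support}

def edgesSplittingNoBlock (N : X → Set X) : Set (Sym2 t.V) :=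
  {e | ∀ z, ∀ w ∈ N z, ¬t.Separates e w z}

variable {t}

lemma separates_iff_mem_edges {x y : X} {p : t.T.Walk (t.leaf x) (t.leaf y)}
    (hp : p.IsPath) {e : Sym2 t.V} : t.Separates e x y ↔ e ∈ p.edges :=
  (t.acyc.mem_edges_iff_not_reachable_deleteEdges hp).symm

lemma Separates.symm {e : Sym2 t.V} {x y : X} (h : t.Separates e x y) :
    t.Separates e y x :=
  fun hr => h hr.symm

lemma neighborSet_leaf_subsingleton (x : X) : (t.T.neighborSet (t.leaf x)).Subsingleton := by
  have := t.finV
  exact Set.ncard_le_one_iff_subsingleton.1 (t.leaf_deg x)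

lemma explains_iff_mem_nbr {M : Type} (lab : Sym2 t.V → Set M) (ε : X → X → Set M) :
    Explains t lab ε ↔ ∀ m x y, x ∈ Nbr ε m y ↔ t.cutSetoid {e | m ∈ lab e} x y := by
  have hnbr : ∀ m {x y}, x ≠ y → (x ∈ Nbr ε m y ↔ m ∉ ε x y) := fun m x y hxy => by
    simp [Nbr, hxy]
  constructor
  · intro h m x y
    by_cases hxy : x = y
    · subst hxy
      exact iff_of_true (Or.inl rfl) ((t.cutSetoid _).refl' x)
    obtain ⟨p, hp⟩ := (t.conn (t.leaf x) (t.leaf y)).exists_isPath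
    rw [hnbr m hxy, h x y hxy p hp m]
    simp [separates_iff_mem_edges hp, imp_not_comm]
  · intro h x y hxy p hp m
    rw [← not_iff_not, ← hnbr m hxy, h m x y]
    simp [separates_iff_mem_edges hp, imp_not_comm]

lemma displays_of_forall_mem_iff {N : X → Set X} {E : Set (Sym2 t.V)}
    (hN : ∀ x y, x ∈ N y ↔ t.cutSetoid E x y) {y y' : X} (hd : Disjoint (N y) (N y')) :
    Displays t (N y) (N y') := by
  have hy' : y' ∉ N y := fun h =>
    Set.disjoint_left.1 hd h ((hN y' y').2 ((t.cutSetoid E).refl' y'))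
  obtain ⟨e, he, hsep⟩ : ∃ e ∈ E, t.Separates e y' y := by simpa [hN] using hy'
  obtain ⟨u, v, huv, rfl, hyu, hy'v⟩ := t.conn.exists_adj_of_not_reachable_deleteEdges hsep.symm
  refine ⟨u, v, huv, fun x hx => ?_, fun x hx => ?_⟩
  · exact (not_not.1 (((hN x y).1 hx) _ he)).trans hyu
  · exact (not_not.1 (((hN x y').1 hx) _ he)).trans hy'v

lemma leaf_mem_hull {A : Set X} {x : X} (hx : x ∈ A) : t.leaf x ∈ t.hull A :=
  ⟨x, hx, x, hx, .nil, .nil, Walk.start_mem_support _⟩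

lemma mem_of_leaf_mem_hull {A : Set X} {x : X} (h : t.leaf x ∈ t.hull A) : x ∈ A := by
  obtain ⟨z, hz, w, hw, p, hp, hx⟩ := h
  rcases hp.eq_or_eq_of_mem_support (neighborSet_leaf_subsingleton x) hx with h | h
  · exact t.leaf_inj h ▸ hz
  · exact t.leaf_inj h ▸ hw

lemma disjoint_hull_of_displays {A B : Set X} (h : Displays t A B) :
    Disjoint (t.hull A) (t.hull B) := by
  obtain ⟨u, v, huv, hA, hB⟩ := h
  have side : ∀ {C : Set X} {a : t.V},
      (∀ x ∈ C, (t.T.deleteEdges {s(u, v)}).Reachable (t.leaf x) a) →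
        ∀ c ∈ t.hull C, (t.T.deleteEdges {s(u, v)}).Reachable c a := by
    rintro C a hC c ⟨z, hz, w, hw, p, hp, hc⟩
    exact (t.acyc.reachable_deleteEdges_of_mem_support hp ((hC z hz).trans (hC w hw).symm)
      hc).symm.trans (hC z hz)
  exact Set.disjoint_left.2 fun c hcA hcB =>
    isBridge_iff.1 (isAcyclic_iff_forall_adj_isBridge.1 t.acyc huv)
      ((side hA c hcA).symm.trans (side hB c hcB))

section Blocks

variable {N : X → Set X} (hself : ∀ y, y ∈ N y) (hpart : Setoid.IsPartition (Set.range N))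
  (hdisp : ∀ y y', Disjoint (N y) (N y') → Displays t (N y) (N y'))
include hpart hdisp

lemma eq_of_mem_hull_of_mem_hull {x z : X} {c : t.V} (hx : c ∈ t.hull (N x))
    (hz : c ∈ t.hull (N z)) : N x = N z := by
  by_contra hne
  exact Set.disjoint_left.1 (disjoint_hull_of_displays (hdisp x z
    (hpart.pairwiseDisjoint ⟨x, rfl⟩ ⟨z, rfl⟩ hne))) hx hz

include hself

/-- Each edge of `q` lies in the hull of some block, and hulls of distinct blocks are disjoint. -/
lemma mem_hull_of_walk {x : X} {a b : t.V} (q : t.T.Walk a b)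
    (hq : ∀ e ∈ q.edges, e ∉ t.edgesSplittingNoBlock N) (ha : a ∈ t.hull (N x)) :
    b ∈ t.hull (N x) := by
  induction q with
  | nil => exact ha
  | @cons a c b hac q ih =>
    refine ih (fun e he => hq e (List.mem_cons_of_mem _ he)) ?_
    obtain ⟨z, w, hw, hsep⟩ : ∃ z, ∃ w ∈ N z, t.Separates s(a, c) w z := by
      simpa [edgesSplittingNoBlock] using hq s(a, c) List.mem_cons_self
    obtain ⟨p, hp⟩ := (t.conn (t.leaf w) (t.leaf z)).exists_isPath
    have hmem := (separates_iff_mem_edges hp).1 hsep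
    have hhull : ∀ d ∈ p.support, d ∈ t.hull (N z) := fun d hd =>
      ⟨w, hw, z, hself z, p, hp, hd⟩
    rw [eq_of_mem_hull_of_mem_hull hpart hdisp ha
      (hhull a (p.fst_mem_support_of_mem_edges hmem))]
    exact hhull c (p.snd_mem_support_of_mem_edges hmem)

lemma mem_iff_cutSetoid_edgesSplittingNoBlock (x y : X) :
    x ∈ N y ↔ t.cutSetoid (t.edgesSplittingNoBlock N) x y := by
  refine ⟨fun h e he => he y x h, fun h => ?_⟩
  obtain ⟨p, hp⟩ := (t.conn (t.leaf x) (t.leaf y)).exists_isPath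
  have hp_split : ∀ e ∈ p.edges, e ∉ t.edgesSplittingNoBlock N := fun e he hno =>
    h e hno ((separates_iff_mem_edges hp).2 he)
  have hyx : y ∈ N x := mem_of_leaf_mem_hull
    (mem_hull_of_walk hself hpart hdisp p hp_split (leaf_mem_hull (hself x)))
  exact Setoid.eq_of_mem_eqv_class hpart.2 ⟨x, rfl⟩ hyx ⟨y, rfl⟩ (hself y) ▸ hself x

end Blocks

end PhyloTree

theorem fitch_iff_partition_and_compatible_general {X M : Type}
    (ε : X → X → Set M) :
    IsSymFitch ε ↔
      ((∀ m : M, Setoid.IsPartition (Set.range (Nbr ε m))) ∧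
        ∃ t : PhyloTree X, ∀ m : M, ∀ y y' : X,
          Disjoint (Nbr ε m y) (Nbr ε m y') →
            Displays t (Nbr ε m y) (Nbr ε m y')) := by
  constructor
  · rintro ⟨t, lab, hexp⟩
    have hN := (t.explains_iff_mem_nbr lab ε).1 hexp
    exact ⟨fun m => Setoid.isPartition_range_of_forall_mem_iff _ (hN m), t,
      fun m _ _ => PhyloTree.displays_of_forall_mem_iff (hN m)⟩
  · rintro ⟨hpart, t, hdisp⟩
    refine ⟨t, fun e => {m | e ∈ t.edgesSplittingNoBlock (Nbr ε m)}, ?_⟩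
    exact (t.explains_iff_mem_nbr _ ε).2 fun m =>
      PhyloTree.mem_iff_cutSetoid_edgesSplittingNoBlock (fun _ => Or.inl rfl) (hpart m) (hdisp m)

/-- Characterization of symmetrized Fitch maps: a symmetric map `ε` on `X`
(`|X| ≥ 3`) is a symmetrized Fitch map iff (1) for every color `m` the
complementary neighborhoods form a partition of `X`, and (2) the subsplit
system of disjoint pairs of complementary neighborhoods is compatible. -/
theorem fitch_iff_partition_and_compatible {X M : Type} [Fintype X]
    (hcard : 3 ≤ Fintype.card X)
    (ε : X → X → Set M) (hsym : ∀ x y : X, ε x y = ε y x) :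
    IsSymFitch ε ↔
      ((∀ m : M, Setoid.IsPartition (Set.range (Nbr ε m))) ∧
        ∃ t : PhyloTree X, ∀ m : M, ∀ y y' : X,
          Disjoint (Nbr ε m y) (Nbr ε m y') →
            Displays t (Nbr ε m y) (Nbr ε m y')) :=
  fitch_iff_partition_and_compatible_general ε
end

section
/- Every monochromatic symmetrized Fitch map on X (|X| ≥ 3) can be explained by an edge-labeled tree (T, λ) of diameter at most 4, i.e., every path in T has at most 4 edges. -/
open SimpleGraph

/-! For a monochromatic Fitch map, "`x = y` or `m ∉ ε x y`" is an equivalence relation whose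
classes are the sets `Nbr ε m y`, and `m ∈ ε x y` holds exactly when `x` and `y` lie in different
classes. Such a map is explained by a tree of depth two. The centre doubles as the vertex of one
class `q₀`, chosen with at least two elements whenever some class has that many, so that the
centre has degree at least three. Every other class with at least two elements gets an inner
vertex adjacent to the centre and to the leaves of that class; all remaining leaves hang off the
centre. An edge carries `m` iff its ends belong to different classes. Every vertex is within
distance two of the centre, so no path has more than four edges. -/

namespace SimpleGraph

variable {V : Type*}

lemma IsAcyclic.eq_bypass_of_isPath [DecidableEq V] {G : SimpleGraph V} (hG : G.IsAcyclic)
    {u v : V} {p : G.Walk u v} (hp : p.IsPath) (w : G.Walk u v) : p = w.bypass :=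
  congrArg Subtype.val ((hG.subsingleton_path u v).elim ⟨p, hp⟩ ⟨w.bypass, w.bypass_isPath⟩)

abbrev ofParent (par : V → V) : SimpleGraph V := fromRel fun a b => b = par a

section ofParent

variable {par : V → V} {root : V} {rk : V → ℕ}

lemma ofParent_adj_par {v : V} (h : v ≠ par v) : (ofParent par).Adj v (par v) :=
  ⟨h, Or.inl rfl⟩

lemma exists_walk_ofParent_root (hrk : ∀ v ≠ root, rk (par v) < rk v) (v : V) :
    ∃ w : (ofParent par).Walk v root, w.length ≤ rk v := by
  induction hv : rk v using Nat.strong_induction_on generalizing v with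
  | _ n ih =>
    by_cases hroot : v = root
    · subst hroot
      exact ⟨Walk.nil, Nat.zero_le _⟩
    have hlt := hrk v hroot
    have hne : v ≠ par v := fun h => hlt.ne (congrArg rk h.symm)
    obtain ⟨w, hw⟩ := ih _ (hv ▸ hlt) (par v) rfl
    exact ⟨Walk.cons (ofParent_adj_par hne) w, by simp only [Walk.length_cons]; omega⟩

lemma ofParent_connected (hrk : ∀ v ≠ root, rk (par v) < rk v) : (ofParent par).Connected := by
  have : Nonempty V := ⟨root⟩
  refine ⟨fun u v => ?_⟩
  obtain ⟨wu, -⟩ := exists_walk_ofParent_root hrk u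
  obtain ⟨wv, -⟩ := exists_walk_ofParent_root hrk v
  exact ⟨wu.append wv.reverse⟩

/-- On a cycle, the vertex of maximal rank would need two distinct parents. -/
lemma ofParent_isAcyclic (hroot : par root = root) (hrk : ∀ v ≠ root, rk (par v) < rk v) :
    (ofParent par).IsAcyclic := by
  classical
  intro v c hc
  obtain ⟨u, hu, hmax⟩ := c.support.toFinset.exists_max_image rk ⟨v, by simp⟩
  rw [List.mem_toFinset] at hu
  set c' := c.rotate u hu
  have hc' : c'.IsCycle := hc.rotate hu
  have parent_of_adj : ∀ b ∈ c'.support, (ofParent par).Adj u b → b = par u := by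
    rintro b hb ⟨hne, hbu | hub⟩
    · exact hbu
    · have hb_root : b ≠ root := by
        rintro rfl
        exact hne (hub.trans hroot)
      have hle := hmax b (List.mem_toFinset.mpr ((c.mem_support_rotate_iff u hu).mp hb))
      exact absurd (hub ▸ hrk b hb_root) (not_lt.mpr hle)
  exact hc'.snd_ne_penultimate <|
    (parent_of_adj _ (c'.getVert_mem_support 1) (c'.adj_snd hc'.not_nil)).trans
      (parent_of_adj _ (c'.getVert_mem_support _) (c'.adj_penultimate hc'.not_nil).symm).symm

lemma ofParent_isPath_length_le (hroot : par root = root)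
    (hrk : ∀ v ≠ root, rk (par v) < rk v) {u v : V} {p : (ofParent par).Walk u v}
    (hp : p.IsPath) : p.length ≤ rk u + rk v := by
  classical
  obtain ⟨wu, hwu⟩ := exists_walk_ofParent_root hrk u
  obtain ⟨wv, hwv⟩ := exists_walk_ofParent_root hrk v
  rw [(ofParent_isAcyclic hroot hrk).eq_bypass_of_isPath hp (wu.append wv.reverse)]
  calc _ ≤ (wu.append wv.reverse).length := Walk.length_bypass_le_length _
    _ ≤ rk u + rk v := by simp only [Walk.length_append, Walk.length_reverse]; omega

end ofParent

lemma Walk.exists_mem_edges_not_isDiag_map {α : Type*} (f : V → α) {G : SimpleGraph V}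
    {u v : V} (p : G.Walk u v) (h : f u ≠ f v) : ∃ e ∈ p.edges, ¬ (e.map f).IsDiag := by
  induction p with
  | nil => exact absurd rfl h
  | @cons u w v _ p ih =>
    by_cases huw : f u = f w
    · obtain ⟨e, he, hdiag⟩ := ih (huw ▸ h)
      exact ⟨e, List.mem_cons_of_mem _ he, hdiag⟩
    · exact ⟨s(u, w), List.mem_cons_self .., by simpa [Sym2.map_mk] using huw⟩

end SimpleGraph

section Fitch

variable {X M : Type} {ε : X → X → Set M}

lemma IsSymFitch.symm (hF : IsSymFitch ε) {x y : X} (hxy : x ≠ y) : ε x y = ε y x := by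
  classical
  obtain ⟨t, lab, hexp⟩ := hF
  obtain ⟨w⟩ := t.conn (t.leaf x) (t.leaf y)
  ext m
  rw [hexp x y hxy _ w.bypass_isPath, hexp y x hxy.symm _ w.bypass_isPath.reverse]
  simp only [Walk.edges_reverse, List.mem_reverse]

/-- The `x`–`z` path runs inside the union of the `x`–`y` and `y`–`z` paths. -/
lemma IsSymFitch.not_mem_trans (hF : IsSymFitch ε) (m : M) {x y z : X} (hxy : x ≠ y)
    (hyz : y ≠ z) (hxz : x ≠ z) (h₁ : m ∉ ε x y) (h₂ : m ∉ ε y z) : m ∉ ε x z := by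
  classical
  obtain ⟨t, lab, hexp⟩ := hF
  obtain ⟨w₁⟩ := t.conn (t.leaf x) (t.leaf y)
  obtain ⟨w₂⟩ := t.conn (t.leaf y) (t.leaf z)
  have p₁ := hexp x y hxy _ w₁.bypass_isPath m
  have p₂ := hexp y z hyz _ w₂.bypass_isPath m
  rw [hexp x z hxz _ (w₁.bypass.append w₂.bypass).bypass_isPath m]
  rintro ⟨e, he, hm⟩
  rcases List.mem_append.mp (Walk.edges_append _ _ ▸ Walk.edges_bypass_subset_edges _ he) with
    h | h
  · exact h₁ (p₁.mpr ⟨e, h, hm⟩)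
  · exact h₂ (p₂.mpr ⟨e, h, hm⟩)

def IsSymFitch.nbrSetoid (hF : IsSymFitch ε) (m : M) : Setoid X where
  r x y := x ∈ Nbr ε m y
  iseqv := by
    refine ⟨fun x => Or.inl rfl, ?_, ?_⟩
    · rintro x y (rfl | h)
      · exact Or.inl rfl
      · by_cases hxy : x = y
        · exact Or.inl hxy.symm
        · exact Or.inr (hF.symm hxy ▸ h)
    · rintro x y z (rfl | h₁) (rfl | h₂)
      · exact Or.inl rfl
      · exact Or.inr h₂
      · exact Or.inr h₁
      · by_cases hxy : x = y
        · exact hxy ▸ Or.inr h₂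
        by_cases hyz : y = z
        · exact hyz ▸ Or.inr h₁
        by_cases hxz : x = z
        · exact Or.inl hxz
        exact Or.inr (hF.not_mem_trans m hxy hyz hxz h₁ h₂)

lemma IsSymFitch.mem_iff_mk_ne (hF : IsSymFitch ε) (m : M) {x y : X} (hxy : x ≠ y) :
    m ∈ ε x y ↔ Quotient.mk (hF.nbrSetoid m) x ≠ Quotient.mk (hF.nbrSetoid m) y := by
  rw [Ne, Quotient.eq]
  exact ⟨fun hm h => h.elim hxy (· hm), fun h => not_not.mp fun hm => h (Or.inr hm)⟩

end Fitch

namespace ClassTree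

variable {X : Type} (s : Setoid X) (q₀ : Quotient s)

def IsBig (q : Quotient s) : Prop := q ≠ q₀ ∧ {x | Quotient.mk s x = q}.Nontrivial

/-- `none` is the centre, which also serves as the vertex of the class `q₀`; `some (inl x)` is
the leaf `x` and `some (inr q)` the vertex of the class `q`. -/
abbrev Vert := Option (X ⊕ {q : Quotient s // IsBig s q₀ q})

open Classical in
noncomputable def hub (x : X) : Vert s q₀ :=
  if h : IsBig s q₀ (Quotient.mk s x) then some (.inr ⟨_, h⟩) else none

noncomputable def par : Vert s q₀ → Vert s q₀
  | some (.inl x) => hub s q₀ x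
  | _ => none

def depth : Vert s q₀ → ℕ
  | none => 0
  | some (.inr _) => 1
  | some (.inl _) => 2

def cls : Vert s q₀ → Quotient s
  | none => q₀
  | some (.inl x) => Quotient.mk s x
  | some (.inr q) => q

noncomputable abbrev graph : SimpleGraph (Vert s q₀) := ofParent (par s q₀)

def lab {M : Type} (m : M) (e : Sym2 (Vert s q₀)) : Set M :=
  {m' | m' = m ∧ ¬ (e.map (cls s q₀)).IsDiag}

variable {s q₀}

lemma hub_of_isBig {x : X} (h : IsBig s q₀ (Quotient.mk s x)) :
    hub s q₀ x = some (.inr ⟨_, h⟩) :=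
  dif_pos h

lemma hub_of_not_isBig {x : X} (h : ¬ IsBig s q₀ (Quotient.mk s x)) : hub s q₀ x = none :=
  dif_neg h

lemma depth_hub_lt_two (x : X) : depth s q₀ (hub s q₀ x) < 2 := by
  by_cases h : IsBig s q₀ (Quotient.mk s x)
  · simp [hub_of_isBig h, depth]
  · simp [hub_of_not_isBig h, depth]

lemma depth_le_two (v : Vert s q₀) : depth s q₀ v ≤ 2 := by
  rcases v with _ | _ | _ <;> simp [depth]

lemma depth_par_lt {v : Vert s q₀} (hv : v ≠ none) : depth s q₀ (par s q₀ v) < depth s q₀ v := by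
  rcases v with _ | x | q
  · exact absurd rfl hv
  · exact depth_hub_lt_two x
  · simp [par, depth]

lemma graph_isAcyclic : (graph s q₀).IsAcyclic :=
  ofParent_isAcyclic rfl fun _ => depth_par_lt

lemma graph_connected : (graph s q₀).Connected :=
  ofParent_connected fun _ => depth_par_lt

lemma isPath_length_le_four {u v : Vert s q₀} {p : (graph s q₀).Walk u v} (hp : p.IsPath) :
    p.length ≤ 4 :=
  (ofParent_isPath_length_le rfl (fun _ => depth_par_lt) hp).trans
    (by have := depth_le_two u; have := depth_le_two v; omega)

lemma par_ne_leaf (v : Vert s q₀) (x : X) : par s q₀ v ≠ some (.inl x) := by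
  rcases v with _ | y | q
  · simp [par]
  · by_cases h : IsBig s q₀ (Quotient.mk s y) <;> simp [par, hub_of_isBig, hub_of_not_isBig, h]
  · simp [par]

lemma adj_hub (x : X) : (graph s q₀).Adj (some (.inl x)) (hub s q₀ x) :=
  ofParent_adj_par (par_ne_leaf _ x).symm

lemma adj_inr_none (q : {q : Quotient s // IsBig s q₀ q}) :
    (graph s q₀).Adj (some (.inr q)) none :=
  ofParent_adj_par (by simp [par])

lemma neighborSet_leaf_subset (x : X) :
    (graph s q₀).neighborSet (some (.inl x)) ⊆ {hub s q₀ x} := by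
  rintro v ⟨-, hv | hv⟩
  · exact hv
  · exact absurd hv.symm (par_ne_leaf v x)

lemma hub_eq_some_inr_iff {x : X} {q : {q : Quotient s // IsBig s q₀ q}} :
    hub s q₀ x = some (.inr q) ↔ Quotient.mk s x = q := by
  by_cases h : IsBig s q₀ (Quotient.mk s x)
  · rw [hub_of_isBig h]
    simp [Subtype.ext_iff, eq_comm]
  · rw [hub_of_not_isBig h]
    simp only [reduceCtorEq, false_iff]
    exact fun hx => h (hx ▸ q.2)

lemma three_le_ncard_neighborSet_inr [Finite X] (q : {q : Quotient s // IsBig s q₀ q}) :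
    3 ≤ ((graph s q₀).neighborSet (some (.inr q))).ncard := by
  obtain ⟨a, ha, b, hb, hab⟩ := q.2.2
  have adj_leaf : ∀ x, Quotient.mk s x = q → (graph s q₀).Adj (some (.inr q)) (some (.inl x)) :=
    fun x hx => (hub_eq_some_inr_iff.mpr hx ▸ adj_hub x).symm
  exact Nat.succ_le_of_lt ((Set.two_lt_ncard_iff (Set.toFinite _)).mpr
    ⟨none, some (.inl a), some (.inl b), adj_inr_none q, adj_leaf a ha, adj_leaf b hb,
      by simp, by simp, by simpa using hab⟩)

/-- When some other class has its own vertex, `q₀` must contribute two leaves to the centre. -/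
lemma three_le_ncard_neighborSet_none [Fintype X] (hX : 2 < Fintype.card X)
    (hq₀ : (∃ q, IsBig s q₀ q) → {x | Quotient.mk s x = q₀}.Nontrivial) :
    3 ≤ ((graph s q₀).neighborSet none).ncard := by
  have adj_leaf : ∀ x, ¬ IsBig s q₀ (Quotient.mk s x) → (graph s q₀).Adj none (some (.inl x)) :=
    fun x hx => (hub_of_not_isBig hx ▸ adj_hub x).symm
  refine Nat.succ_le_of_lt ((Set.two_lt_ncard_iff (Set.toFinite _)).mpr ?_)
  by_cases hbig : ∃ q, IsBig s q₀ q
  · obtain ⟨q, hq⟩ := hbig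
    obtain ⟨a, ha, b, hb, hab⟩ := hq₀ ⟨q, hq⟩
    exact ⟨some (.inr ⟨q, hq⟩), some (.inl a), some (.inl b), (adj_inr_none _).symm,
      adj_leaf a fun h => h.1 ha, adj_leaf b fun h => h.1 hb, by simp, by simp, by simpa using hab⟩
  · simp only [not_exists] at hbig
    obtain ⟨a, b, c, hab, hac, hbc⟩ := Fintype.two_lt_card_iff.mp hX
    exact ⟨some (.inl a), some (.inl b), some (.inl c), adj_leaf a (hbig _), adj_leaf b (hbig _),
      adj_leaf c (hbig _), by simpa using hab, by simpa using hac, by simpa using hbc⟩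

lemma cls_hub {x : X} (h : {x' | Quotient.mk s x' = Quotient.mk s x}.Nontrivial) :
    cls s q₀ (hub s q₀ x) = Quotient.mk s x := by
  by_cases hbig : IsBig s q₀ (Quotient.mk s x)
  · rw [hub_of_isBig hbig]
    rfl
  · rw [hub_of_not_isBig hbig]
    by_contra hne
    exact hbig ⟨Ne.symm hne, h⟩

/-- Two leaves of one class hang off a common hub of that class, so the path between them
crosses no edge between different classes. -/
lemma exists_edge_cls_ne_iff {x y : X} (hxy : x ≠ y)
    {p : (graph s q₀).Walk (some (.inl x)) (some (.inl y))} (hp : p.IsPath) :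
    (∃ e ∈ p.edges, ¬ (e.map (cls s q₀)).IsDiag) ↔ Quotient.mk s x ≠ Quotient.mk s y := by
  classical
  refine ⟨fun ⟨e, he, hdiag⟩ hcls => hdiag ?_, p.exists_mem_edges_not_isDiag_map (cls s q₀)⟩
  have hhub : hub s q₀ x = hub s q₀ y := by simp only [hub, hcls]
  have hcls_hub : cls s q₀ (hub s q₀ x) = Quotient.mk s x := cls_hub ⟨x, rfl, y, hcls.symm, hxy⟩
  let w := Walk.cons (adj_hub x) (Walk.cons (hhub ▸ (adj_hub y).symm) Walk.nil)
  rw [graph_isAcyclic.eq_bypass_of_isPath hp w] at he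
  have he_w := Walk.edges_bypass_subset_edges _ he
  simp only [w, Walk.edges_cons, Walk.edges_nil, List.mem_cons, List.not_mem_nil, or_false]
    at he_w
  rcases he_w with rfl | rfl
  · exact Sym2.mk_isDiag_iff.mpr hcls_hub.symm
  · exact Sym2.mk_isDiag_iff.mpr (hcls_hub.trans hcls)

variable (s q₀) in
noncomputable def phyloTree [Fintype X] (hX : 2 < Fintype.card X)
    (hq₀ : (∃ q, IsBig s q₀ q) → {x | Quotient.mk s x = q₀}.Nontrivial) : PhyloTree X where
  V := Vert s q₀
  finV := Fintype.ofFinite _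
  T := graph s q₀
  conn := graph_connected
  acyc := graph_isAcyclic
  leaf x := some (.inl x)
  leaf_inj _ _ h := Sum.inl_injective (Option.some_injective _ h)
  leaf_deg x := (Set.ncard_le_ncard (neighborSet_leaf_subset x)).trans_eq (Set.ncard_singleton _)
  inner_deg
    | none, _ => three_le_ncard_neighborSet_none hX hq₀
    | some (.inr q), _ => three_le_ncard_neighborSet_inr q
    | some (.inl x), h => absurd ⟨x, rfl⟩ h

lemma explains_of_mem_iff_mk_ne [Fintype X] {M : Type} {m : M} {ε : X → X → Set M}
    (hX : 2 < Fintype.card X) (hq₀ : (∃ q, IsBig s q₀ q) → {x | Quotient.mk s x = q₀}.Nontrivial)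
    (hmono : ∀ x y, ε x y ⊆ {m})
    (hε : ∀ x y, x ≠ y → (m ∈ ε x y ↔ Quotient.mk s x ≠ Quotient.mk s y)) :
    Explains (phyloTree s q₀ hX hq₀) (lab s q₀ m) ε := by
  intro x y hxy p hp m'
  by_cases hm : m' = m
  · subst hm
    simp only [lab, Set.mem_ofPred_eq, true_and, hε x y hxy]
    exact (exists_edge_cls_ne_iff hxy hp).symm
  · exact iff_of_false (fun h => hm (hmono x y h)) fun ⟨_, _, h⟩ => hm h.1

variable (s) in
lemma exists_center_class [Nonempty X] :
    ∃ q₀ : Quotient s, (∃ q, IsBig s q₀ q) → {x | Quotient.mk s x = q₀}.Nontrivial := by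
  by_cases h : ∃ q : Quotient s, {x | Quotient.mk s x = q}.Nontrivial
  · obtain ⟨q, hq⟩ := h
    exact ⟨q, fun _ => hq⟩
  · exact ⟨Quotient.mk s (Classical.arbitrary X), fun ⟨q, hq⟩ => absurd ⟨q, hq.2⟩ h⟩

end ClassTree

theorem mono_fitch_diameter_le_four_general {X M : Type} [Fintype X]
    (hcard : 3 ≤ Fintype.card X) (m : M)
    (ε : X → X → Set M)
    (hmono : ∀ x y : X, ε x y ⊆ {m}) (hF : IsSymFitch ε) :
    ∃ t : PhyloTree X, ∃ lab : Sym2 t.V → Set M, Explains t lab ε ∧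
      ∀ (u v : t.V) (p : t.T.Walk u v), p.IsPath → p.length ≤ 4 := by
  have : Nonempty X := Fintype.card_pos_iff.mp (by omega)
  obtain ⟨q₀, hq₀⟩ := ClassTree.exists_center_class (hF.nbrSetoid m)
  exact ⟨ClassTree.phyloTree _ q₀ hcard hq₀, ClassTree.lab _ q₀ m,
    ClassTree.explains_of_mem_iff_mk_ne hcard hq₀ hmono fun _ _ => hF.mem_iff_mk_ne m,
    fun _ _ _ => ClassTree.isPath_length_le_four⟩

/-- Every monochromatic symmetrized Fitch map on `X` (`|X| ≥ 3`) can be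
explained by an edge-labeled tree of diameter at most `4`. -/
theorem mono_fitch_diameter_le_four {X M : Type} [Fintype X]
    (hcard : 3 ≤ Fintype.card X) (m : M)
    (ε : X → X → Set M) (hsym : ∀ x y : X, ε x y = ε y x)
    (hmono : ∀ x y : X, ε x y ⊆ {m}) (hF : IsSymFitch ε) :
    ∃ t : PhyloTree X, ∃ lab : Sym2 t.V → Set M, Explains t lab ε ∧
      ∀ (u v : t.V) (p : t.T.Walk u v), p.IsPath → p.length ≤ 4 :=
  mono_fitch_diameter_le_four_general hcard m ε hmono hF
end

section
/- In the reduction from quartets: for a set Q = {q_1, ..., q_n} of quartets on X and the map ε(x,y) := { i : q_i = ab|cd and {x,y} ∉ {{a,b},{c,d}} }, for each quartet q_i = ab|cd the complementary neighborhoods satisfy N_i[a] = N_i[b] = {a,b}, N_i[c] = N_i[d] = {c,d}, and N_i[y] = {y} for all other y; consequently N_i[ε] is a partition of X for every i, and the non-trivial subsplit system S*(ε) equals Q. -/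
open SimpleGraph

/-- In the quartet reduction, with `ε(x,y) = { i : {x,y} ∉ {{a_i,b_i},{c_i,d_i}} }`
for quartets `q i = a_i b_i | c_i d_i`: the complementary neighborhoods satisfy
`N_i[a_i] = N_i[b_i] = {a_i, b_i}`, `N_i[c_i] = N_i[d_i] = {c_i, d_i}`, and
`N_i[y] = {y}` otherwise; consequently `N_i[ε]` is a partition of `X` for each
`i`, and the non-trivial subsplit system `S*(ε)` equals the set of quartets. -/
theorem quartet_reduction_neighborhoods {X : Type} [Fintype X] (n : ℕ)
    (q : Fin n → (X × X) × (X × X))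
    (hq : ∀ i, [(q i).1.1, (q i).1.2, (q i).2.1, (q i).2.2].Pairwise Ne) :
    letI ε : X → X → Set (Fin n) := fun x y =>
      {i : Fin n | ¬ (({x, y} : Set X) = {(q i).1.1, (q i).1.2} ∨
        ({x, y} : Set X) = {(q i).2.1, (q i).2.2})}
    (∀ i : Fin n,
        Nbr ε i (q i).1.1 = {(q i).1.1, (q i).1.2} ∧
        Nbr ε i (q i).1.2 = {(q i).1.1, (q i).1.2} ∧
        Nbr ε i (q i).2.1 = {(q i).2.1, (q i).2.2} ∧
        Nbr ε i (q i).2.2 = {(q i).2.1, (q i).2.2} ∧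
        ∀ y : X, y ∉ ({(q i).1.1, (q i).1.2, (q i).2.1, (q i).2.2} : Set X) →
          Nbr ε i y = {y}) ∧
      (∀ i : Fin n, Setoid.IsPartition (Set.range (Nbr ε i))) ∧
      (∀ A B : Set X,
        (∃ i : Fin n, ∃ y y' : X, Disjoint (Nbr ε i y) (Nbr ε i y') ∧
            2 ≤ (Nbr ε i y).ncard ∧ 2 ≤ (Nbr ε i y').ncard ∧
            A = Nbr ε i y ∧ B = Nbr ε i y') ↔
          (∃ i : Fin n,
            (A = {(q i).1.1, (q i).1.2} ∧ B = {(q i).2.1, (q i).2.2}) ∨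
            (A = {(q i).2.1, (q i).2.2} ∧ B = {(q i).1.1, (q i).1.2}))) := by

  set ε : X → X → Set (Fin n) := fun x y =>
      {i : Fin n | ¬ (({x, y} : Set X) = {(q i).1.1, (q i).1.2} ∨
        ({x, y} : Set X) = {(q i).2.1, (q i).2.2})} with hε
  have key : ∀ (i : Fin n) (y x : X), x ∈ Nbr ε i y ↔
      (x = y ∨ ({x, y} : Set X) = {(q i).1.1, (q i).1.2} ∨
        ({x, y} : Set X) = {(q i).2.1, (q i).2.2}) := by
    intro i y x
    simp only [Nbr, hε, Set.mem_setOf_eq, not_not]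
  have facts : ∀ i : Fin n,
      Nbr ε i (q i).1.1 = {(q i).1.1, (q i).1.2} ∧
      Nbr ε i (q i).1.2 = {(q i).1.1, (q i).1.2} ∧
      Nbr ε i (q i).2.1 = {(q i).2.1, (q i).2.2} ∧
      Nbr ε i (q i).2.2 = {(q i).2.1, (q i).2.2} ∧
      ∀ y : X, y ∉ ({(q i).1.1, (q i).1.2, (q i).2.1, (q i).2.2} : Set X) →
        Nbr ε i y = {y} := by
    intro i
    have h := hq i
    simp only [List.pairwise_cons, List.mem_cons, List.not_mem_nil] at h
    have hab : (q i).1.1 ≠ (q i).1.2 := h.1 _ (Or.inl rfl)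
    have hac : (q i).1.1 ≠ (q i).2.1 := h.1 _ (Or.inr (Or.inl rfl))
    have had : (q i).1.1 ≠ (q i).2.2 := h.1 _ (Or.inr (Or.inr (Or.inl rfl)))
    have hbc : (q i).1.2 ≠ (q i).2.1 := h.2.1 _ (Or.inl rfl)
    have hbd : (q i).1.2 ≠ (q i).2.2 := h.2.1 _ (Or.inr (Or.inl rfl))
    have hcd : (q i).2.1 ≠ (q i).2.2 := h.2.2.1 _ (Or.inl rfl)
    refine ⟨?_, ?_, ?_, ?_, ?_⟩
    · ext x
      rw [key]
      simp only [Set.pair_eq_pair_iff, Set.mem_insert_iff, Set.mem_singleton_iff]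
      tauto
    · ext x
      rw [key]
      simp only [Set.pair_eq_pair_iff, Set.mem_insert_iff, Set.mem_singleton_iff]
      tauto
    · ext x
      rw [key]
      simp only [Set.pair_eq_pair_iff, Set.mem_insert_iff, Set.mem_singleton_iff]
      tauto
    · ext x
      rw [key]
      simp only [Set.pair_eq_pair_iff, Set.mem_insert_iff, Set.mem_singleton_iff]
      tauto
    · intro y hy
      simp only [Set.mem_insert_iff, Set.mem_singleton_iff, not_or] at hy
      obtain ⟨h1, h2, h3, h4⟩ := hy
      ext x
      rw [key]
      simp only [Set.pair_eq_pair_iff, Set.mem_singleton_iff]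
      tauto
  have mem_self : ∀ (i : Fin n) (y : X), y ∈ Nbr ε i y := by
    intro i y; rw [key]; left; rfl
  have nbr_eq_of_mem : ∀ (i : Fin n) (y x : X), x ∈ Nbr ε i y → Nbr ε i y = Nbr ε i x := by
    intro i y x hx
    obtain ⟨f1, f2, f3, f4, f5⟩ := facts i
    rw [key] at hx
    rcases hx with rfl | h | h
    · rfl
    · rcases Set.pair_eq_pair_iff.1 h with ⟨rfl, rfl⟩ | ⟨rfl, rfl⟩
      · rw [f1, f2]
      · rw [f1, f2]
    · rcases Set.pair_eq_pair_iff.1 h with ⟨rfl, rfl⟩ | ⟨rfl, rfl⟩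
      · rw [f3, f4]
      · rw [f3, f4]
  refine ⟨facts, ?_, ?_⟩
  · intro i
    constructor
    · rintro ⟨y, hy⟩
      have := mem_self i y
      rw [hy] at this
      exact this
    · intro x
      refine ⟨Nbr ε i x, ⟨⟨x, rfl⟩, mem_self i x⟩, ?_⟩
      rintro s ⟨⟨y, rfl⟩, hx⟩
      exact nbr_eq_of_mem i y x hx
  · intro A B
    constructor
    · rintro ⟨i, y, y', hdisj, hy2, hy'2, rfl, rfl⟩
      obtain ⟨f1, f2, f3, f4, f5⟩ := facts i
      have classify : ∀ z : X, 2 ≤ (Nbr ε i z).ncard →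
          Nbr ε i z = {(q i).1.1, (q i).1.2} ∨ Nbr ε i z = {(q i).2.1, (q i).2.2} := by
        intro z hz
        by_cases hmem : z ∈ ({(q i).1.1, (q i).1.2, (q i).2.1, (q i).2.2} : Set X)
        · simp only [Set.mem_insert_iff, Set.mem_singleton_iff] at hmem
          rcases hmem with rfl | rfl | rfl | rfl
          · exact Or.inl f1
          · exact Or.inl f2
          · exact Or.inr f3
          · exact Or.inr f4
        · rw [f5 z hmem] at hz
          simp [Set.ncard_singleton] at hz
      have hA := classify y hy2
      have hB := classify y' hy'2
      refine ⟨i, ?_⟩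
      rcases hA with hA | hA <;> rcases hB with hB | hB
      · exfalso
        rw [hA, hB] at hdisj
        exact Set.disjoint_left.1 hdisj (Set.mem_insert _ _) (Set.mem_insert _ _)
      · exact Or.inl ⟨hA, hB⟩
      · exact Or.inr ⟨hA, hB⟩
      · exfalso
        rw [hA, hB] at hdisj
        exact Set.disjoint_left.1 hdisj (Set.mem_insert _ _) (Set.mem_insert _ _)
    · rintro ⟨i, h⟩
      obtain ⟨f1, f2, f3, f4, f5⟩ := facts i
      have hpw := hq i
      simp only [List.pairwise_cons, List.mem_cons, List.not_mem_nil] at hpw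
      have hab : (q i).1.1 ≠ (q i).1.2 := hpw.1 _ (Or.inl rfl)
      have hcd : (q i).2.1 ≠ (q i).2.2 := hpw.2.2.1 _ (Or.inl rfl)
      have hac : (q i).1.1 ≠ (q i).2.1 := hpw.1 _ (Or.inr (Or.inl rfl))
      have had : (q i).1.1 ≠ (q i).2.2 := hpw.1 _ (Or.inr (Or.inr (Or.inl rfl)))
      have hbc : (q i).1.2 ≠ (q i).2.1 := hpw.2.1 _ (Or.inl rfl)
      have hbd : (q i).1.2 ≠ (q i).2.2 := hpw.2.1 _ (Or.inr (Or.inl rfl))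
      have hdisj : Disjoint (Nbr ε i (q i).1.1) (Nbr ε i (q i).2.1) := by
        rw [f1, f3]
        rw [Set.disjoint_left]
        intro x hx
        simp only [Set.mem_insert_iff, Set.mem_singleton_iff] at hx ⊢
        rcases hx with rfl | rfl <;> push_neg <;> exact ⟨by assumption, by assumption⟩
      have hc1 : 2 ≤ (Nbr ε i (q i).1.1).ncard := by
        rw [f1, Set.ncard_pair hab]
      have hc2 : 2 ≤ (Nbr ε i (q i).2.1).ncard := by
        rw [f3, Set.ncard_pair hcd]
      rcases h with ⟨rfl, rfl⟩ | ⟨rfl, rfl⟩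
      · exact ⟨i, (q i).1.1, (q i).2.1, hdisj, hc1, hc2, f1.symm, f3.symm⟩
      · exact ⟨i, (q i).2.1, (q i).1.1, hdisj.symm, hc2, hc1, f3.symm, f1.symm⟩
end

section
/- Let ε be a monochromatic symmetrized Fitch map with M = {m} and |X| ≥ 3, and suppose its graph G_m(ε) is complete multi-partite with at least two maximal independent sets of size ≥ 2 (collection I_2). Then any edge-labeled tree (T, λ) on X satisfying: |inner vertices of T| = |I_2|; each I ∈ I_2 has a dedicated inner vertex v_I adjacent to all leaves of I; outer edges to leaves in ⋃I_2 labeled ∅; outer edges to all other leaves labeled {m}; and all inner edges labeled {m}; explains ε. -/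
open SimpleGraph

/-! Every label is `∅` or `{m}`, so only the colour `m` matters. If `x` and `y` lie in a common
`I ∈ I₂`, they are not `m`-adjacent, and by acyclicity the tree path between them is
`x – v_I – y`, whose two edges are labelled `∅`. Otherwise they are `m`-adjacent, and the path
carries `m`: either an endpoint lies outside `⋃ I₂` and its outer edge is labelled `{m}`, or
`x ∈ I`, `y ∈ I'` with `v_I ≠ v_I'`, and the path leaves `v_I` towards a vertex that is not
`leaf y`; being interior to the path it has two neighbours, so it is inner, and the edge is
labelled `{m}`. -/

namespace PhyloTree

variable {X : Type} (t : PhyloTree X)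

theorem eq_of_adj_leaf {z : X} {w w' : t.V} (hw : t.T.Adj (t.leaf z) w)
    (hw' : t.T.Adj (t.leaf z) w') : w = w' :=
  have := t.finV
  (Set.ncard_le_one (Set.toFinite _)).mp (t.leaf_deg z) w hw w' hw'

theorem notMem_range_leaf_of_isPath_cons_cons {u v w b : t.V} (huv : t.T.Adj u v)
    (hvw : t.T.Adj v w) {r : t.T.Walk w b} (hp : (Walk.cons huv (Walk.cons hvw r)).IsPath) :
    v ∉ Set.range t.leaf := by
  rintro ⟨z, rfl⟩
  obtain rfl : u = w := t.eq_of_adj_leaf huv.symm hvw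
  exact ((Walk.cons_isPath_iff _ _).mp hp).2 (List.mem_cons_of_mem _ r.start_mem_support)

theorem edges_eq_of_isPath_of_adj_leaf {x y : X} (hxy : x ≠ y) {v : t.V}
    (hx : t.T.Adj (t.leaf x) v) (hy : t.T.Adj (t.leaf y) v)
    {p : t.T.Walk (t.leaf x) (t.leaf y)} (hp : p.IsPath) :
    p.edges = [s(t.leaf x, v), s(v, t.leaf y)] := by
  have hq : (Walk.cons hx (Walk.cons hy.symm Walk.nil)).IsPath := by
    simp [Walk.cons_isPath_iff, hx.ne, hy.ne.symm, t.leaf_inj.ne hxy]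
  obtain rfl : p = _ :=
    congrArg Subtype.val ((t.acyc.subsingleton_path _ _).elim ⟨p, hp⟩ ⟨_, hq⟩)
  rfl

theorem exists_inner_edge_mem_edges {x y : X} {v v' : t.V} (hx : t.T.Adj (t.leaf x) v)
    (hv : v ∉ Set.range t.leaf) (hy : t.T.Adj (t.leaf y) v') (hvv' : v ≠ v')
    {p : t.T.Walk (t.leaf x) (t.leaf y)} (hp : p.IsPath) :
    ∃ w, t.T.Adj v w ∧ w ∉ Set.range t.leaf ∧ s(v, w) ∈ p.edges := by
  have hxy : t.leaf x ≠ t.leaf y := by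
    intro h
    obtain rfl := t.leaf_inj h
    exact hvv' (t.eq_of_adj_leaf hx hy)
  obtain ⟨v₁, hxv₁, q, rfl⟩ := Walk.exists_eq_cons_of_ne hxy p
  obtain rfl : v₁ = v := t.eq_of_adj_leaf hxv₁ hx
  obtain ⟨w, hvw, r, rfl⟩ := Walk.exists_eq_cons_of_ne (fun h => hv ⟨y, h.symm⟩) q
  have hwy : w ≠ t.leaf y := by
    rintro rfl
    exact hvv' (t.eq_of_adj_leaf hvw.symm hy)
  obtain ⟨u, hwu, s, rfl⟩ := Walk.exists_eq_cons_of_ne hwy r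
  exact ⟨w, hvw, t.notMem_range_leaf_of_isPath_cons_cons hvw hwu hp.of_cons, by simp⟩

end PhyloTree

section FitchMap

variable {X M : Type} {ε : X → X → Set M} {m : M}

theorem notMem_of_mem_Nbr (hsym : ∀ x y : X, ε x y = ε y x)
    (hmp : ∀ a b c : X, a ≠ b → a ≠ c → b ≠ c →
      m ∉ ε a b → m ∉ ε b c → m ∉ ε a c)
    {y a b : X} (ha : a ∈ Nbr ε m y) (hb : b ∈ Nbr ε m y) (hab : a ≠ b) : m ∉ ε a b := by
  rcases ha with rfl | ha
  · rcases hb with rfl | hb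
    · exact absurd rfl hab
    · rwa [hsym]
  rcases hb with rfl | hb
  · exact ha
  rcases eq_or_ne a y with rfl | hay
  · rwa [hsym]
  rcases eq_or_ne b y with rfl | hby
  · exact ha
  exact hmp a y b hay hab hby.symm ha (by rwa [hsym])

theorem mem_iff_not_exists_mem_mem [Finite X] (hsym : ∀ x y : X, ε x y = ε y x)
    (hmp : ∀ a b c : X, a ≠ b → a ≠ c → b ≠ c →
      m ∉ ε a b → m ∉ ε b c → m ∉ ε a c)
    {I2 : Set (Set X)} (hI2 : I2 = {N : Set X | (∃ y : X, N = Nbr ε m y) ∧ 2 ≤ N.ncard})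
    {x y : X} (hxy : x ≠ y) : m ∈ ε x y ↔ ¬ ∃ N ∈ I2, x ∈ N ∧ y ∈ N := by
  subst hI2
  constructor
  · rintro hmem ⟨N, ⟨⟨z, rfl⟩, -⟩, hx, hy⟩
    exact notMem_of_mem_Nbr hsym hmp hx hy hxy hmem
  · contrapose!
    intro h
    have hx : x ∈ Nbr ε m y := Or.inr h
    have hy : y ∈ Nbr ε m y := Or.inl rfl
    have hcard : 2 ≤ (Nbr ε m y).ncard :=
      (Set.one_lt_ncard (Set.toFinite _)).mpr ⟨x, hx, y, hy, hxy⟩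
    exact ⟨_, ⟨⟨y, rfl⟩, hcard⟩, hx, hy⟩

end FitchMap

section Construction

variable {X M : Type} {m : M} {t : PhyloTree X} {lab : Sym2 t.V → Set M} {I2 : Set (Set X)}

theorem lab_subset_singleton
    (hout_empty : ∀ x : X, (∃ N ∈ I2, x ∈ N) →
      ∀ w : t.V, t.T.Adj (t.leaf x) w → lab s(t.leaf x, w) = ∅)
    (hout_m : ∀ x : X, (¬ ∃ N ∈ I2, x ∈ N) →
      ∀ w : t.V, t.T.Adj (t.leaf x) w → lab s(t.leaf x, w) = {m})
    (hinner_m : ∀ u w : t.V, t.T.Adj u w → u ∉ Set.range t.leaf →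
      w ∉ Set.range t.leaf → lab s(u, w) = {m})
    {e : Sym2 t.V} (he : e ∈ t.T.edgeSet) : lab e ⊆ {m} := by
  have hleaf : ∀ z w, t.T.Adj (t.leaf z) w → lab s(t.leaf z, w) ⊆ {m} := by
    intro z w hzw
    by_cases hz : ∃ N ∈ I2, z ∈ N
    · simp [hout_empty z hz w hzw]
    · simp [hout_m z hz w hzw]
  induction e using Sym2.ind with
  | h u w =>
    rw [mem_edgeSet] at he
    by_cases hu : u ∈ Set.range t.leaf
    · obtain ⟨z, rfl⟩ := hu
      exact hleaf z w he
    by_cases hw : w ∈ Set.range t.leaf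
    · obtain ⟨z, rfl⟩ := hw
      exact Sym2.eq_swap ▸ hleaf z u he.symm
    · simp [hinner_m u w he hu hw]

theorem lab_eq_empty_of_mem_edges {vtx : Set X → t.V}
    (hvtx_adj : ∀ N ∈ I2, ∀ x ∈ N, t.T.Adj (t.leaf x) (vtx N))
    (hout_empty : ∀ x : X, (∃ N ∈ I2, x ∈ N) →
      ∀ w : t.V, t.T.Adj (t.leaf x) w → lab s(t.leaf x, w) = ∅)
    {x y : X} (hxy : x ≠ y) {N : Set X} (hN : N ∈ I2) (hx : x ∈ N) (hy : y ∈ N)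
    {p : t.T.Walk (t.leaf x) (t.leaf y)} (hp : p.IsPath) : ∀ e ∈ p.edges, lab e = ∅ := by
  have hxv := hvtx_adj N hN x hx
  have hyv := hvtx_adj N hN y hy
  rw [t.edges_eq_of_isPath_of_adj_leaf hxy hxv hyv hp]
  simp only [List.mem_cons, List.not_mem_nil, or_false]
  rintro e (rfl | rfl)
  · exact hout_empty x ⟨N, hN, hx⟩ _ hxv
  · rw [Sym2.eq_swap]
    exact hout_empty y ⟨N, hN, hy⟩ _ hyv

theorem exists_mem_edges_lab_eq_singleton {vtx : Set X → t.V}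
    (hvtx_inner : ∀ N ∈ I2, vtx N ∉ Set.range t.leaf)
    (hvtx_inj : Set.InjOn vtx I2)
    (hvtx_adj : ∀ N ∈ I2, ∀ x ∈ N, t.T.Adj (t.leaf x) (vtx N))
    (hout_m : ∀ x : X, (¬ ∃ N ∈ I2, x ∈ N) →
      ∀ w : t.V, t.T.Adj (t.leaf x) w → lab s(t.leaf x, w) = {m})
    (hinner_m : ∀ u w : t.V, t.T.Adj u w → u ∉ Set.range t.leaf →
      w ∉ Set.range t.leaf → lab s(u, w) = {m})
    {x y : X} (hxy : x ≠ y) (hsep : ¬ ∃ N ∈ I2, x ∈ N ∧ y ∈ N)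
    {p : t.T.Walk (t.leaf x) (t.leaf y)} (hp : p.IsPath) : ∃ e ∈ p.edges, lab e = {m} := by
  have hnil : ¬ p.Nil := Walk.not_nil_of_ne (t.leaf_inj.ne hxy)
  by_cases hx : ∃ N ∈ I2, x ∈ N
  swap
  · exact ⟨_, p.mk_start_snd_mem_edges hnil, hout_m x hx _ (p.adj_snd hnil)⟩
  by_cases hy : ∃ N ∈ I2, y ∈ N
  swap
  · refine ⟨_, p.mk_penultimate_end_mem_edges hnil, ?_⟩
    rw [Sym2.eq_swap]
    exact hout_m y hy _ (p.adj_penultimate hnil).symm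
  obtain ⟨N, hN, hxN⟩ := hx
  obtain ⟨N', hN', hyN'⟩ := hy
  have hNN' : vtx N ≠ vtx N' := fun h => hsep ⟨N, hN, hxN, hvtx_inj hN hN' h ▸ hyN'⟩
  obtain ⟨w, hvw, hw, he⟩ := t.exists_inner_edge_mem_edges (hvtx_adj N hN x hxN)
    (hvtx_inner N hN) (hvtx_adj N' hN' y hyN') hNN' hp
  exact ⟨_, he, hinner_m _ w hvw (hvtx_inner N hN) hw⟩

end Construction

theorem construction_explains_mono_fitch_general {X M : Type} [Fintype X]
    (m : M)
    (ε : X → X → Set M) (hsym : ∀ x y : X, ε x y = ε y x)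
    (hmono : ∀ x y : X, ε x y ⊆ {m})
    (hmp : ∀ a b c : X, a ≠ b → a ≠ c → b ≠ c →
      m ∉ ε a b → m ∉ ε b c → m ∉ ε a c)
    (I2 : Set (Set X))
    (hI2 : I2 = {N : Set X | (∃ y : X, N = Nbr ε m y) ∧ 2 ≤ N.ncard})
    (t : PhyloTree X) (lab : Sym2 t.V → Set M)
    (vtx : Set X → t.V)
    (hvtx_inner : ∀ N ∈ I2, vtx N ∉ Set.range t.leaf)
    (hvtx_inj : Set.InjOn vtx I2)
    (hvtx_adj : ∀ N ∈ I2, ∀ x ∈ N, t.T.Adj (t.leaf x) (vtx N))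
    (hout_empty : ∀ x : X, (∃ N ∈ I2, x ∈ N) →
      ∀ w : t.V, t.T.Adj (t.leaf x) w → lab s(t.leaf x, w) = ∅)
    (hout_m : ∀ x : X, (¬ ∃ N ∈ I2, x ∈ N) →
      ∀ w : t.V, t.T.Adj (t.leaf x) w → lab s(t.leaf x, w) = {m})
    (hinner_m : ∀ u w : t.V, t.T.Adj u w → u ∉ Set.range t.leaf →
      w ∉ Set.range t.leaf → lab s(u, w) = {m}) :
    Explains t lab ε := by
  intro x y hxy p hp m'
  rcases eq_or_ne m' m with rfl | hm
  · rw [mem_iff_not_exists_mem_mem hsym hmp hI2 hxy]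
    constructor
    · intro hsep
      obtain ⟨e, he, hlab⟩ := exists_mem_edges_lab_eq_singleton hvtx_inner hvtx_inj hvtx_adj
        hout_m hinner_m hxy hsep hp
      exact ⟨e, he, hlab ▸ rfl⟩
    · rintro ⟨e, he, hme⟩ ⟨N, hN, hx, hy⟩
      rw [lab_eq_empty_of_mem_edges hvtx_adj hout_empty hxy hN hx hy hp e he] at hme
      exact hme
  · refine iff_of_false (fun h => hm (hmono x y h)) ?_
    rintro ⟨e, he, hme⟩
    exact hm (lab_subset_singleton hout_empty hout_m hinner_m (p.edges_subset_edgeSet he) hme)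

/-- Construction of explaining trees for monochromatic symmetrized Fitch maps:
let `ε` be monochromatic and symmetric with `G_m(ε)` complete multi-partite
(non-`m`-adjacency is transitive) with at least two maximal independent sets of
size `≥ 2` (the collection `I₂`, given by the complementary neighborhoods of
size `≥ 2`). Then any edge-labeled tree `(t, lab)` on `X` with: exactly `|I₂|`
inner vertices; a dedicated inner vertex `v_I` for each `I ∈ I₂` adjacent to
all leaves of `I`; outer edges at leaves of `⋃ I₂` labeled `∅`; all other outer
edges labeled `{m}`; and all inner edges labeled `{m}`; explains `ε`. -/
theorem construction_explains_mono_fitch {X M : Type} [Fintype X]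
    (hcard : 3 ≤ Fintype.card X) (m : M)
    (ε : X → X → Set M) (hsym : ∀ x y : X, ε x y = ε y x)
    (hmono : ∀ x y : X, ε x y ⊆ {m})
    (hmp : ∀ a b c : X, a ≠ b → a ≠ c → b ≠ c →
      m ∉ ε a b → m ∉ ε b c → m ∉ ε a c)
    (I2 : Set (Set X))
    (hI2 : I2 = {N : Set X | (∃ y : X, N = Nbr ε m y) ∧ 2 ≤ N.ncard})
    (hI2card : 2 ≤ I2.ncard)
    (t : PhyloTree X) (lab : Sym2 t.V → Set M)
    (hinner : ({v : t.V | v ∉ Set.range t.leaf}).ncard = I2.ncard)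
    (vtx : Set X → t.V)
    (hvtx_inner : ∀ N ∈ I2, vtx N ∉ Set.range t.leaf)
    (hvtx_inj : Set.InjOn vtx I2)
    (hvtx_adj : ∀ N ∈ I2, ∀ x ∈ N, t.T.Adj (t.leaf x) (vtx N))
    (hout_empty : ∀ x : X, (∃ N ∈ I2, x ∈ N) →
      ∀ w : t.V, t.T.Adj (t.leaf x) w → lab s(t.leaf x, w) = ∅)
    (hout_m : ∀ x : X, (¬ ∃ N ∈ I2, x ∈ N) →
      ∀ w : t.V, t.T.Adj (t.leaf x) w → lab s(t.leaf x, w) = {m})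
    (hinner_m : ∀ u w : t.V, t.T.Adj u w → u ∉ Set.range t.leaf →
      w ∉ Set.range t.leaf → lab s(u, w) = {m}) :
    Explains t lab ε :=
  construction_explains_mono_fitch_general m ε hsym hmono hmp I2 hI2 t lab vtx hvtx_inner hvtx_inj
    hvtx_adj hout_empty hout_m hinner_m
end
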